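/- arXiv:0904.1984 — 3 statements merged into one kernel-verified Lean document; each statement's English description precedes it below -/
import Mathlib

section
/- Let $q:[a,\infty)\to\mathbb{R}$ be a continuously differentiable function with $q(a)=0$, $q'(a)>0$, $q(t)>0$ for all $t>a$, and $\lim_{t\to\infty} q(t)/t^2 = \varepsilon$ for some $\varepsilon>0$. Then $F:[a,\infty)\to\mathbb{R}$ defined by $F(t)=\int_a^t q(\tau)^{-1/2}\,d\tau$ is well defined (the improper integral converges at $a$), strictly increasing, and $\lim_{t\to\infty}F(t)=\infty$. Moreover, if $G:[0,\infty)\to[a,\infty)$ is the inverse function of $F$, then the even extension $g:\mathbb{R}\to[a,\infty)$ given by $g(t)=G(t)$ for $t\ge 0$ and $g(t)=G(-t)$ for $t<0$ is differentiable and satisfies $(g'(t))^2 = q(g(t))$ for all $t\in\mathbb{R}$. -/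
/-!
Near `a`, `q τ` is comparable to `q'(a) (τ - a)`, so `1 / √q` is dominated by a multiple of
`(τ - a)^(-1/2)` and is integrable; near `∞`, `q ≤ C t²` gives `1 / √q ≥ 1 / (√C t)`, whose
integral diverges logarithmically. The inverse function theorem gives `G' = √(q ∘ G)` on
`(0, ∞)`. At `0`, the bound `q τ ≤ K (τ - a)` gives `s = F (G s) ≥ √((G s - a) / K)`, i.e.
`G s - a ≤ K s²`, so the even extension has derivative `0 = √(q a)` there.
-/

open Filter MeasureTheory Set Topology Asymptotics

theorem eventually_mul_sub_lt_of_hasDerivWithinAt {q : ℝ → ℝ} {a c c₁ c₂ : ℝ}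
    (hd : HasDerivWithinAt q c (Ici a) a) (hqa : q a = 0) (h₁ : c₁ < c) (h₂ : c < c₂) :
    ∀ᶠ τ in 𝓝[>] a, c₁ * (τ - a) < q τ ∧ q τ < c₂ * (τ - a) := by
  have hslope := (hasDerivWithinAt_iff_tendsto_slope' self_notMem_Ioi).1 hd.Ioi_of_Ici
  filter_upwards [hslope (Ioo_mem_nhds h₁ h₂), self_mem_nhdsWithin] with τ hτ (hτa : a < τ)
  rw [mem_preimage, slope_def_field, hqa, sub_zero, mem_Ioo, lt_div_iff₀ (sub_pos.2 hτa),
    div_lt_iff₀ (sub_pos.2 hτa)] at hτ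
  exact hτ

theorem continuousOn_one_div_sqrt {q : ℝ → ℝ} {s : Set ℝ} (hq : ContinuousOn q s)
    (hpos : ∀ τ ∈ s, 0 < q τ) : ContinuousOn (fun τ => 1 / Real.sqrt (q τ)) s :=
  continuousOn_const.div hq.sqrt fun τ hτ => (Real.sqrt_pos.2 (hpos τ hτ)).ne'

theorem integrableOn_Ioc_one_div_sqrt_of_mul_sub_le {q : ℝ → ℝ} {a b k : ℝ} (hk : 0 < k)
    (hq : ContinuousOn q (Ioc a b)) (hlow : ∀ τ ∈ Ioc a b, k * (τ - a) ≤ q τ) :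
    IntegrableOn (fun τ => 1 / Real.sqrt (q τ)) (Ioc a b) := by
  rcases le_or_gt b a with hba | hab
  · simp [Ioc_eq_empty_of_le hba]
  have hpos : ∀ τ ∈ Ioc a b, 0 < q τ := fun τ hτ =>
    (mul_pos hk (sub_pos.2 hτ.1)).trans_le (hlow τ hτ)
  have hmaj : IntegrableOn (fun τ => (Real.sqrt k)⁻¹ * (τ - a) ^ (-(1 / 2) : ℝ)) (Ioc a b) := by
    have h := ((intervalIntegral.intervalIntegrable_rpow' (by norm_num : (-1 : ℝ) < -(1 / 2))
      (a := 0) (b := b - a)).comp_sub_right a).const_mul (Real.sqrt k)⁻¹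
    rw [zero_add, sub_add_cancel] at h
    exact (intervalIntegrable_iff_integrableOn_Ioc_of_le hab.le).1 h
  refine hmaj.mono' ((continuousOn_one_div_sqrt hq hpos).aestronglyMeasurable measurableSet_Ioc)
    ((ae_restrict_iff' measurableSet_Ioc).2 (ae_of_all _ fun τ hτ => ?_))
  have hτa : 0 < τ - a := sub_pos.2 hτ.1
  rw [Real.norm_of_nonneg (by positivity), Real.rpow_neg hτa.le, ← Real.sqrt_eq_rpow, one_div,
    ← mul_inv, ← Real.sqrt_mul hk.le]
  exact inv_anti₀ (by positivity) (Real.sqrt_le_sqrt (hlow τ hτ))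

theorem sub_le_mul_sq_integral_one_div_sqrt {q : ℝ → ℝ} {a t K : ℝ} (hat : a ≤ t)
    (hpos : ∀ τ ∈ Ioc a t, 0 < q τ) (hup : ∀ τ ∈ Ioc a t, q τ ≤ K * (τ - a))
    (hint : IntegrableOn (fun τ => 1 / Real.sqrt (q τ)) (Ioc a t)) :
    t - a ≤ K * (∫ τ in a..t, 1 / Real.sqrt (q τ)) ^ 2 := by
  rcases hat.eq_or_lt with rfl | hat
  · simp
  have hta : 0 < t - a := sub_pos.2 hat
  have hK : 0 < K :=
    pos_of_mul_pos_left ((hpos t ⟨hat, le_rfl⟩).trans_le (hup t ⟨hat, le_rfl⟩)) hta.le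
  have hX : 0 < K * (t - a) := by positivity
  have hlow : (t - a) / Real.sqrt (K * (t - a)) ≤ ∫ τ in a..t, 1 / Real.sqrt (q τ) := by
    rw [intervalIntegral.integral_of_le hat.le]
    calc (t - a) / Real.sqrt (K * (t - a)) = ∫ _ in Ioc a t, 1 / Real.sqrt (K * (t - a)) := by
          rw [setIntegral_const, Real.volume_real_Ioc_of_le hat.le, smul_eq_mul, mul_one_div]
      _ ≤ ∫ τ in Ioc a t, 1 / Real.sqrt (q τ) := by
          refine setIntegral_mono_on (integrableOn_const measure_Ioc_lt_top.ne) hint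
            measurableSet_Ioc fun τ hτ => ?_
          refine one_div_le_one_div_of_le (Real.sqrt_pos.2 (hpos τ hτ)) (Real.sqrt_le_sqrt ?_)
          exact (hup τ hτ).trans (by nlinarith [hτ.2])
  have hsq : ((t - a) / Real.sqrt (K * (t - a))) ^ 2 = (t - a) / K := by
    rw [div_pow, Real.sq_sqrt hX.le]
    field_simp
  rw [← div_le_iff₀' hK, ← hsq]
  exact pow_le_pow_left₀ (by positivity) hlow 2

theorem integrableOn_Ioc_one_div_sqrt {q : ℝ → ℝ} {a c : ℝ} (hq : ContinuousOn q (Ici a))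
    (hqa : q a = 0) (hd : HasDerivWithinAt q c (Ici a) a) (hc : 0 < c)
    (hqpos : ∀ τ, a < τ → 0 < q τ) (t : ℝ) :
    IntegrableOn (fun τ => 1 / Real.sqrt (q τ)) (Ioc a t) := by
  obtain ⟨b, hab : a < b, hb⟩ := mem_nhdsGT_iff_exists_Ioo_subset.1
    (eventually_mul_sub_lt_of_hasDerivWithinAt hd hqa (half_lt_self hc) (lt_two_mul_self hc))
  obtain ⟨m, ham, hmb⟩ := exists_between hab
  have hnear : IntegrableOn (fun τ => 1 / Real.sqrt (q τ)) (Ioc a m) :=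
    integrableOn_Ioc_one_div_sqrt_of_mul_sub_le (half_pos hc)
      (hq.mono (Ioc_subset_Ioi_self.trans Ioi_subset_Ici_self))
      fun τ hτ => (hb (Ioc_subset_Ioo_right hmb hτ)).1.le
  have hfar : IntegrableOn (fun τ => 1 / Real.sqrt (q τ)) (Icc m t) :=
    (continuousOn_one_div_sqrt (hq.mono fun τ hτ => ham.le.trans hτ.1)
      fun τ hτ => hqpos τ (ham.trans_le hτ.1)).integrableOn_Icc
  exact (hnear.union hfar).mono_set fun τ hτ => by
    rcases le_or_gt τ m with h | h
    · exact Or.inl ⟨hτ.1, h⟩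
    · exact Or.inr ⟨h.le, hτ.2⟩

theorem strictMonoOn_integral_of_pos {f : ℝ → ℝ} {a : ℝ}
    (hint : ∀ t, IntegrableOn f (Ioc a t)) (hpos : ∀ τ, a < τ → 0 < f τ) :
    StrictMonoOn (fun t => ∫ τ in a..t, f τ) (Ici a) := by
  intro s (hs : a ≤ s) t (ht : a ≤ t) hst
  have hii : ∀ u, a ≤ u → IntervalIntegrable f volume a u := fun u hu =>
    (intervalIntegrable_iff_integrableOn_Ioc_of_le hu).2 (hint u)
  have := intervalIntegral.intervalIntegral_pos_of_pos_on ((hii s hs).symm.trans (hii t ht))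
    (fun τ hτ => hpos τ (hs.trans_lt hτ.1)) hst
  rw [← intervalIntegral.integral_interval_sub_left (hii t ht) (hii s hs)] at this
  exact sub_pos.1 this

theorem tendsto_integral_one_div_sqrt_atTop {q : ℝ → ℝ} {a : ℝ}
    (hint : ∀ t, IntegrableOn (fun τ => 1 / Real.sqrt (q τ)) (Ioc a t))
    (hqpos : ∀ τ, a < τ → 0 < q τ) (hgrowth : q =O[atTop] fun t => t ^ 2) :
    Tendsto (fun t => ∫ τ in a..t, 1 / Real.sqrt (q τ)) atTop atTop := by
  obtain ⟨C, hC, hCq⟩ := hgrowth.exists_pos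
  obtain ⟨T, hT⟩ := eventually_atTop.1
    (hCq.bound.and ((eventually_gt_atTop a).and (eventually_gt_atTop 0)))
  obtain ⟨-, hTa, hT0⟩ := hT T le_rfl
  have hlog : ∀ t, T ≤ t →
      (Real.sqrt C)⁻¹ * Real.log (t / T) ≤ ∫ τ in a..t, 1 / Real.sqrt (q τ) := by
    intro t hTt
    have hii : IntervalIntegrable (fun τ => 1 / Real.sqrt (q τ)) volume a t :=
      (intervalIntegrable_iff_integrableOn_Ioc_of_le (hTa.le.trans hTt)).2 (hint t)
    have h0 : (0 : ℝ) ∉ uIcc T t := by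
      rw [uIcc_of_le hTt]
      exact fun h => hT0.not_ge h.1
    rw [← integral_one_div h0, ← intervalIntegral.integral_const_mul]
    refine (intervalIntegral.integral_mono_on hTt ?_ (hii.mono_set ?_) fun τ hτ => ?_).trans
      (intervalIntegral.integral_mono_interval hTa.le hTt le_rfl
        (ae_of_all _ fun τ => (by positivity : (0 : ℝ) ≤ 1 / Real.sqrt (q τ))) hii)
    · exact ContinuousOn.intervalIntegrable_of_Icc hTt (continuousOn_const.mul
        (continuousOn_const.div continuousOn_id fun τ hτ => (hT τ hτ.1).2.2.ne'))
    · rw [uIcc_of_le hTt, uIcc_of_le (hTa.le.trans hTt)]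
      exact Icc_subset_Icc_left hTa.le
    · obtain ⟨hqτ, hτa, hτ0⟩ := hT τ hτ.1
      rw [Real.norm_of_nonneg (hqpos τ hτa).le, norm_pow, Real.norm_of_nonneg hτ0.le] at hqτ
      have hsqrt : Real.sqrt C * τ = Real.sqrt (C * τ ^ 2) := by
        rw [Real.sqrt_mul hC.le, Real.sqrt_sq hτ0.le]
      rw [← one_div, div_mul_div_comm, one_mul, hsqrt]
      exact one_div_le_one_div_of_le (Real.sqrt_pos.2 (hqpos τ hτa)) (Real.sqrt_le_sqrt hqτ)
  exact tendsto_atTop_mono' _ (eventually_atTop.2 ⟨T, hlog⟩)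
    ((Real.tendsto_log_atTop.comp (tendsto_id.atTop_div_const hT0)).const_mul_atTop
      (by positivity))

theorem continuousAt_of_leftInvOn_of_strictMonoOn {α β : Type*} [LinearOrder α]
    [TopologicalSpace α] [OrderTopology α] [DenselyOrdered α] [LinearOrder β]
    [TopologicalSpace β] [OrderTopology β] {F : α → β} {G : β → α} {A : Set α} {B : Set β}
    {s : β} (hF : StrictMonoOn F A) (hFA : MapsTo F A B) (hGB : MapsTo G B A)
    (hGF : LeftInvOn G F A) (hFG : LeftInvOn F G B) (hB : B ∈ 𝓝 s) (hA : A ∈ 𝓝 (G s)) :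
    ContinuousAt G s := by
  have hGmono : MonotoneOn G B := fun x hx y hy hxy => by
    by_contra! h
    have := hF (hGB hy) (hGB hx) h
    rw [hFG hx, hFG hy] at this
    exact this.not_ge hxy
  refine continuousAt_of_monotoneOn_of_image_mem_nhds hGmono hB (mem_of_superset hA ?_)
  rw [← hGF.image_image]
  exact image_mono hFA.image_subset

theorem hasDerivAt_comp_abs_zero {G : ℝ → ℝ} {K δ : ℝ} (hδ : 0 < δ)
    (h : ∀ s, 0 ≤ s → s < δ → |G s - G 0| ≤ K * s ^ 2) :
    HasDerivAt (fun t => G |t|) 0 0 := by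
  have hO : (fun t => G |t| - G |0|) =O[𝓝 0] fun t : ℝ => t ^ 2 := by
    refine IsBigO.of_bound K ?_
    filter_upwards [Ioo_mem_nhds (neg_lt_zero.2 hδ) hδ] with t ht
    rw [abs_zero, Real.norm_eq_abs, norm_pow, Real.norm_eq_abs, sq_abs, ← sq_abs t]
    exact h |t| (abs_nonneg t) (abs_lt.2 ht)
  rw [hasDerivAt_iff_isLittleO_nhds_zero]
  simpa using hO.trans_isLittleO (isLittleO_pow_id one_lt_two)

theorem differentiable_and_deriv_sq_comp_abs {G D q : ℝ → ℝ}
    (hG : ∀ s, 0 < s → HasDerivAt G (D s) s) (hD : ∀ s, 0 < s → D s ^ 2 = q (G s))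
    (h0 : HasDerivAt (fun t => G |t|) 0 0) (hq0 : q (G 0) = 0) :
    Differentiable ℝ (fun t => G |t|) ∧ ∀ t, deriv (fun t => G |t|) t ^ 2 = q (G |t|) := by
  have hderiv : ∀ t, ∃ d, HasDerivAt (fun t => G |t|) d t ∧ d ^ 2 = q (G |t|) := by
    intro t
    rcases eq_or_ne t 0 with rfl | ht
    · exact ⟨0, h0, by simp [hq0]⟩
    refine ⟨D |t| * SignType.sign t, (hG |t| (abs_pos.2 ht)).comp t (hasDerivAt_abs ht), ?_⟩
    rw [mul_pow, hD |t| (abs_pos.2 ht)]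
    rcases ht.lt_or_gt with ht | ht <;> simp [ht]
  refine ⟨fun t => (hderiv t).choose_spec.1.differentiableAt, fun t => ?_⟩
  obtain ⟨d, hd, hdq⟩ := hderiv t
  rw [hd.deriv, hdq]

section Inverse

variable {q F G : ℝ → ℝ} {a : ℝ}

theorem lt_inverse_of_pos (hFa : F a = 0) (hFG : ∀ s ∈ Ici (0 : ℝ), F (G s) = s)
    (hG : ∀ s ∈ Ici (0 : ℝ), G s ∈ Ici a) {s : ℝ} (hs : 0 < s) : a < G s :=
  (hG s hs.le).lt_of_ne fun h => by simpa [← h, hFa, hs.ne] using hFG s hs.le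

theorem hasDerivAt_inverse_of_integral_one_div_sqrt (hq : ContinuousOn q (Ioi a))
    (hqpos : ∀ τ, a < τ → 0 < q τ)
    (hint : ∀ t, IntegrableOn (fun τ => 1 / Real.sqrt (q τ)) (Ioc a t))
    (hF : ∀ t, F t = ∫ τ in a..t, 1 / Real.sqrt (q τ)) (hmono : StrictMonoOn F (Ici a))
    (hGF : ∀ t ∈ Ici a, G (F t) = t) (hFG : ∀ s ∈ Ici (0 : ℝ), F (G s) = s)
    (hG : ∀ s ∈ Ici (0 : ℝ), G s ∈ Ici a) (s : ℝ) (hs : 0 < s) :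
    HasDerivAt G (Real.sqrt (q (G s))) s := by
  have hFa : F a = 0 := by simp [hF]
  have hGs : a < G s := lt_inverse_of_pos hFa hFG hG hs
  have hf := continuousOn_one_div_sqrt hq hqpos
  have hFderiv : HasDerivAt F (1 / Real.sqrt (q (G s))) (G s) := by
    rw [funext hF]
    exact intervalIntegral.integral_hasDerivAt_right
      ((intervalIntegrable_iff_integrableOn_Ioc_of_le hGs.le).2 (hint _))
      (hf.stronglyMeasurableAtFilter isOpen_Ioi _ hGs) (hf.continuousAt (Ioi_mem_nhds hGs))
  have hGcont : ContinuousAt G s :=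
    continuousAt_of_leftInvOn_of_strictMonoOn hmono
      (fun t ht => hFa ▸ hmono.monotoneOn self_mem_Ici ht ht) hG hGF hFG
      (Ici_mem_nhds hs) (Ici_mem_nhds hGs)
  simpa using hFderiv.of_local_left_inverse hGcont
    (one_div_pos.2 (Real.sqrt_pos.2 (hqpos _ hGs))).ne'
    (eventually_of_mem (Ici_mem_nhds hs) hFG)

theorem exists_inverse_sub_le_mul_sq {c : ℝ} (hd : HasDerivWithinAt q c (Ici a) a)
    (hqa : q a = 0) (hqpos : ∀ τ, a < τ → 0 < q τ)
    (hint : ∀ t, IntegrableOn (fun τ => 1 / Real.sqrt (q τ)) (Ioc a t))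
    (hF : ∀ t, F t = ∫ τ in a..t, 1 / Real.sqrt (q τ)) (hmono : StrictMonoOn F (Ici a))
    (hFG : ∀ s ∈ Ici (0 : ℝ), F (G s) = s) (hG : ∀ s ∈ Ici (0 : ℝ), G s ∈ Ici a) :
    ∃ δ > 0, ∀ s, 0 ≤ s → s < δ → G s - a ≤ (c + 1) * s ^ 2 := by
  obtain ⟨b, hab : a < b, hb⟩ := mem_nhdsGT_iff_exists_Ioo_subset.1
    (eventually_mul_sub_lt_of_hasDerivWithinAt hd hqa (sub_one_lt c) (lt_add_one c))
  obtain ⟨m, ham, hmb⟩ := exists_between hab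
  have hFa : F a = 0 := by simp [hF]
  refine ⟨F m, hFa ▸ hmono self_mem_Ici ham.le ham, fun s hs hsm => ?_⟩
  have hGm : G s < m := lt_of_not_ge fun h => by
    have := hmono.monotoneOn (mem_Ici.2 ham.le) (hG s hs) h
    rw [hFG s hs] at this
    exact this.not_gt hsm
  have := sub_le_mul_sq_integral_one_div_sqrt (hG s hs) (fun τ hτ => hqpos τ hτ.1)
    (fun τ hτ => (hb ⟨hτ.1, hτ.2.trans_lt (hGm.trans hmb)⟩).2.le) (hint _)
  rwa [← hF, hFG s hs] at this

end Inverse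

theorem stmt_1_general (a ε : ℝ) (q : ℝ → ℝ)
    (hq : ContDiffOn ℝ 1 q (Set.Ici a))
    (hqa : q a = 0)
    (hq'a : 0 < derivWithin q (Set.Ici a) a)
    (hqpos : ∀ t, a < t → 0 < q t)
    (hlim : Tendsto (fun t => q t / t ^ 2) atTop (nhds ε))
    (F : ℝ → ℝ)
    (hF : ∀ t, F t = ∫ τ in a..t, 1 / Real.sqrt (q τ)) :
    (∀ t, a ≤ t → IntegrableOn (fun τ => 1 / Real.sqrt (q τ)) (Set.Ioc a t)) ∧
    StrictMonoOn F (Set.Ici a) ∧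
    Tendsto F atTop atTop ∧
    ∀ G : ℝ → ℝ,
      (∀ t ∈ Set.Ici a, G (F t) = t) →
      (∀ s ∈ Set.Ici (0 : ℝ), F (G s) = s) →
      (∀ s ∈ Set.Ici (0 : ℝ), G s ∈ Set.Ici a) →
      ∀ g : ℝ → ℝ,
        (∀ t, 0 ≤ t → g t = G t) →
        (∀ t, t < 0 → g t = G (-t)) →
        Differentiable ℝ g ∧ ∀ t, deriv g t ^ 2 = q (g t) := by
  have hd : HasDerivWithinAt q (derivWithin q (Ici a) a) (Ici a) a :=
    (hq.differentiableOn one_ne_zero a self_mem_Ici).hasDerivWithinAt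
  have hint := integrableOn_Ioc_one_div_sqrt hq.continuousOn hqa hd hq'a hqpos
  have hFeq : F = fun t => ∫ τ in a..t, 1 / Real.sqrt (q τ) := funext hF
  have hmono : StrictMonoOn F (Ici a) :=
    hFeq ▸ strictMonoOn_integral_of_pos hint fun τ hτ =>
      one_div_pos.2 (Real.sqrt_pos.2 (hqpos τ hτ))
  have hgrowth : q =O[atTop] fun t => t ^ 2 :=
    isBigO_of_div_tendsto_nhds
      ((eventually_ne_atTop 0).mono fun t ht h => absurd h (pow_ne_zero 2 ht)) ε hlim
  refine ⟨fun t _ => hint t, hmono, hFeq ▸ tendsto_integral_one_div_sqrt_atTop hint hqpos hgrowth,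
    fun G hGF hFG hG g hg hg' => ?_⟩
  have hgG : g = fun t => G |t| := funext fun t => by
    rcases le_or_gt 0 t with ht | ht
    · rw [hg t ht, abs_of_nonneg ht]
    · rw [hg' t ht, abs_of_neg ht]
  have hFa : F a = 0 := by simp [hF]
  have hG0 : G 0 = a := hFa ▸ hGF a self_mem_Ici
  obtain ⟨δ, hδ, hGδ⟩ := exists_inverse_sub_le_mul_sq hd hqa hqpos hint hF hmono hFG hG
  subst hgG
  exact differentiable_and_deriv_sq_comp_abs
    (hasDerivAt_inverse_of_integral_one_div_sqrt (hq.continuousOn.mono Ioi_subset_Ici_self)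
      hqpos hint hF hmono hGF hFG hG)
    (fun s hs => Real.sq_sqrt (hqpos _ (lt_inverse_of_pos hFa hFG hG hs)).le)
    (hasDerivAt_comp_abs_zero hδ fun s hs hsδ => by
      rw [hG0, abs_of_nonneg (sub_nonneg.2 (hG s hs))]
      exact hGδ s hs hsδ)
    (hG0 ▸ hqa)

/-- Lemma 2.2 of the paper: if `q ∈ C¹([a,∞))` vanishes at `a` with `q'(a) > 0`,
is positive on `(a,∞)` and `q(t)/t² → ε > 0`, then `F(t) = ∫_a^t q(τ)^{-1/2} dτ`
is well defined, strictly increasing and tends to `∞`; moreover the even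
extension `g` of the inverse `G` of `F` solves `(g')² = q ∘ g` on all of `ℝ`. -/
theorem stmt_1 (a ε : ℝ) (hε : 0 < ε) (q : ℝ → ℝ)
    (hq : ContDiffOn ℝ 1 q (Set.Ici a))
    (hqa : q a = 0)
    (hq'a : 0 < derivWithin q (Set.Ici a) a)
    (hqpos : ∀ t, a < t → 0 < q t)
    (hlim : Tendsto (fun t => q t / t ^ 2) atTop (nhds ε))
    (F : ℝ → ℝ)
    (hF : ∀ t, F t = ∫ τ in a..t, 1 / Real.sqrt (q τ)) :
    (∀ t, a ≤ t → IntegrableOn (fun τ => 1 / Real.sqrt (q τ)) (Set.Ioc a t)) ∧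
    StrictMonoOn F (Set.Ici a) ∧
    Tendsto F atTop atTop ∧
    ∀ G : ℝ → ℝ,
      (∀ t ∈ Set.Ici a, G (F t) = t) →
      (∀ s ∈ Set.Ici (0 : ℝ), F (G s) = s) →
      (∀ s ∈ Set.Ici (0 : ℝ), G s ∈ Set.Ici a) →
      ∀ g : ℝ → ℝ,
        (∀ t, 0 ≤ t → g t = G t) →
        (∀ t, t < 0 → g t = G (-t)) →
        Differentiable ℝ g ∧ ∀ t, deriv g t ^ 2 = q (g t) :=
  stmt_1_general a ε q hq hqa hq'a hqpos hlim F hF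
end

section
/- Let $q:[a,b]\to\mathbb{R}$ be a continuously differentiable function with $q(a)=0=q(b)$, $q'(a)>0$, $q'(b)<0$, and $q(t)>0$ for all $a<t<b$. Then $F:[a,b]\to\mathbb{R}$ defined by $F(t)=\int_a^t q(\tau)^{-1/2}\,d\tau$ is well defined, strictly increasing, and $T:=2\lim_{t\to b}F(t)$ is finite. Moreover, if $G:[0,T/2]\to[a,b]$ is the inverse of $F$, then the $T$-periodic function $g:\mathbb{R}\to[a,b]$ determined by $g(t)=G(t)$ for $0\le t\le T/2$ and $g(t)=G(-t)$ for $-T/2\le t\le 0$ is differentiable and satisfies $(g'(t))^2 = q(g(t))$ for all $t\in\mathbb{R}$. -/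
open Filter MeasureTheory

/-!
Near a simple zero `q` grows at least linearly, so `1 / √q` is dominated by a multiple of
`|τ - a| ^ (-1/2)` and is integrable. Hence `F` is a strictly increasing homeomorphism of `[a, b]`
onto `[0, T/2]` with `F' = 1 / √q` inside, and its inverse satisfies `G' = √(q ∘ G)` on the open
interval. Since `√(q ∘ G)` extends continuously by `0` to the endpoints, `G` has vanishing one-sided
derivatives there. The even periodic extension `g` is symmetric about `0` and about `T/2`, so its
two one-sided derivatives at these points are both `0`; elsewhere its derivative is transported
from `(0, T/2)` by reflection and translation, which preserve `(g')²`.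
-/

open Set Topology

section Symmetry

variable {g : ℝ → ℝ} {c D t : ℝ}

theorem HasDerivAt.reflect_of_symm (hsymm : ∀ x, g (2 * c - x) = g x) (h : HasDerivAt g D t) :
    HasDerivAt g (-D) (2 * c - t) := by
  have h' : HasDerivAt g D (2 * c - (2 * c - t)) := by rwa [sub_sub_cancel]
  simpa only [hsymm] using h'.comp_const_sub (2 * c) (2 * c - t)

theorem HasDerivWithinAt.reflect_of_symm (hsymm : ∀ x, g (2 * c - x) = g x) {s s' : Set ℝ}
    (h : HasDerivWithinAt g D s c) (hs : MapsTo (2 * c - ·) s' s) :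
    HasDerivWithinAt g (-D) s' c := by
  have h' : HasDerivWithinAt g D s (2 * c - c) := by rwa [two_mul, add_sub_cancel_right]
  simpa [Function.comp_def, hsymm] using
    h'.comp c ((hasDerivAt_id c).const_sub (2 * c)).hasDerivWithinAt hs

theorem HasDerivWithinAt.hasDerivAt_of_symm_Ici (hsymm : ∀ x, g (2 * c - x) = g x)
    (h : HasDerivWithinAt g 0 (Ici c) c) : HasDerivAt g 0 c := by
  have h' : HasDerivWithinAt g 0 (Iic c) c := by
    simpa only [neg_zero] using
      h.reflect_of_symm (s' := Iic c) hsymm fun x (hx : x ≤ c) => show c ≤ 2 * c - x by linarith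
  simpa using h'.union h

theorem HasDerivWithinAt.hasDerivAt_of_symm_Iic (hsymm : ∀ x, g (2 * c - x) = g x)
    (h : HasDerivWithinAt g 0 (Iic c) c) : HasDerivAt g 0 c := by
  have h' : HasDerivWithinAt g 0 (Ici c) c := by
    simpa only [neg_zero] using
      h.reflect_of_symm (s' := Ici c) hsymm fun x (hx : c ≤ x) => show 2 * c - x ≤ c by linarith
  simpa using h.union h'

theorem Function.Periodic.hasDerivAt_add_zsmul {p : ℝ} (hper : Function.Periodic g p)
    (h : HasDerivAt g D t) (m : ℤ) : HasDerivAt g D (t + m • p) := by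
  have h' : HasDerivAt g D (t + m • p - m • p) := by rwa [add_sub_cancel_right]
  simpa only [(hper.zsmul m).sub_eq] using h'.comp_sub_const (t + m • p) (m • p)

theorem Function.Periodic.even_of_forall_mem_Icc {L : ℝ} (hL : 0 < L)
    (hper : Function.Periodic g (2 * L)) (h : ∀ x ∈ Icc (-L) L, g (-x) = g x) :
    Function.Even g := by
  intro t
  obtain ⟨m, ⟨hm₁, hm₂⟩, -⟩ := existsUnique_sub_zsmul_mem_Ico (by positivity : 0 < 2 * L) t (-L)
  have hneg : -t = -(t - m • (2 * L)) - m • (2 * L) := by abel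
  rw [hneg, (hper.zsmul m).sub_eq, h _ ⟨hm₁, by linarith⟩, (hper.zsmul m).sub_eq]

theorem exists_hasDerivAt_sq_eq_of_even_of_periodic {d φ : ℝ → ℝ} {L : ℝ} (hL : 0 < L)
    (heven : Function.Even g) (hper : Function.Periodic g (2 * L))
    (hd : ∀ s ∈ Icc 0 L, HasDerivWithinAt g (d s) (Icc 0 L) s) (hd₀ : d 0 = 0) (hdL : d L = 0)
    (hφ : ∀ s ∈ Icc 0 L, d s ^ 2 = φ (g s)) (t : ℝ) :
    ∃ D, HasDerivAt g D t ∧ D ^ 2 = φ (g t) := by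
  have hsymm₀ : ∀ x, g (2 * 0 - x) = g x := fun x => by simpa using heven x
  have hsymmL : ∀ x, g (2 * L - x) = g x := fun x => by rw [hper.sub_eq', heven]
  have hhalf : ∀ s ∈ Icc 0 L, HasDerivAt g (d s) s := by
    rintro s ⟨hs₀, hsL⟩
    rcases hs₀.eq_or_lt with rfl | hs₀
    · rw [hd₀]
      refine HasDerivWithinAt.hasDerivAt_of_symm_Ici hsymm₀ ?_
      simpa [hd₀] using (hd 0 ⟨le_rfl, hL.le⟩).mono_of_mem_nhdsWithin (Icc_mem_nhdsGE hL)
    rcases hsL.eq_or_lt with rfl | hsL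
    · rw [hdL]
      refine HasDerivWithinAt.hasDerivAt_of_symm_Iic hsymmL ?_
      simpa [hdL] using (hd s ⟨hs₀.le, le_rfl⟩).mono_of_mem_nhdsWithin (Icc_mem_nhdsLE hs₀)
    exact (hd s ⟨hs₀.le, hsL.le⟩).hasDerivAt (Icc_mem_nhds hs₀ hsL)
  have hperiod : ∀ s ∈ Icc (-L) L, ∃ D, HasDerivAt g D s ∧ D ^ 2 = φ (g s) := by
    rintro s ⟨hLs, hsL⟩
    rcases le_total 0 s with hs | hs
    · exact ⟨d s, hhalf s ⟨hs, hsL⟩, hφ s ⟨hs, hsL⟩⟩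
    · have hs' : -s ∈ Icc 0 L := ⟨by linarith, by linarith⟩
      refine ⟨-d (-s), by simpa using (hhalf (-s) hs').reflect_of_symm hsymm₀, ?_⟩
      rw [neg_sq, hφ (-s) hs', heven]
  obtain ⟨m, ⟨hm₁, hm₂⟩, -⟩ := existsUnique_sub_zsmul_mem_Ico (by positivity : 0 < 2 * L) t (-L)
  obtain ⟨D, hD, hDφ⟩ := hperiod (t - m • (2 * L)) ⟨hm₁, by linarith⟩
  refine ⟨D, by simpa using hper.hasDerivAt_add_zsmul hD m, ?_⟩
  rw [hDφ, (hper.zsmul m).sub_eq]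

end Symmetry

section Integrability

variable {q : ℝ → ℝ}

theorem eventually_mul_sub_le_of_hasDerivWithinAt_Ici {a c d : ℝ}
    (hq : HasDerivWithinAt q d (Ici a) a) (hqa : q a = 0) (hcd : c < d) :
    ∀ᶠ τ in 𝓝[>] a, c * (τ - a) ≤ q τ := by
  have hslope := (hasDerivWithinAt_iff_tendsto_slope' self_notMem_Ioi).1 hq.Ioi_of_Ici
  filter_upwards [hslope.eventually (eventually_gt_nhds hcd), self_mem_nhdsWithin]
    with τ hτ (hτa : a < τ)
  rw [slope_def_field, hqa, sub_zero, lt_div_iff₀ (sub_pos.2 hτa)] at hτ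
  exact hτ.le

theorem eventually_mul_sub_le_of_hasDerivWithinAt_Iic {b c d : ℝ}
    (hq : HasDerivWithinAt q d (Iic b) b) (hqb : q b = 0) (hcd : c < -d) :
    ∀ᶠ τ in 𝓝[<] b, c * (b - τ) ≤ q τ := by
  have hslope := (hasDerivWithinAt_iff_tendsto_slope' self_notMem_Iio).1 hq.Iio_of_Iic
  filter_upwards [hslope.eventually (eventually_lt_nhds (show d < -c by linarith)),
    self_mem_nhdsWithin] with τ hτ (hτb : τ < b)
  rw [slope_def_field, hqb, sub_zero, div_lt_iff_of_neg (sub_neg.2 hτb)] at hτ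
  linarith

theorem intervalIntegrable_one_div_sqrt_of_mul_sub_le {a u c : ℝ} (hc : 0 < c) (hau : a ≤ u)
    (hq : ContinuousOn q (Ioo a u)) (hle : ∀ τ ∈ Ioo a u, c * (τ - a) ≤ q τ) :
    IntervalIntegrable (fun τ => 1 / √(q τ)) volume a u := by
  have hpos : ∀ τ ∈ Ioo a u, 0 < √(q τ) := fun τ hτ =>
    Real.sqrt_pos.2 ((mul_pos hc (sub_pos.2 hτ.1)).trans_le (hle τ hτ))
  have hdom : IntervalIntegrable (fun τ => (√c)⁻¹ * (τ - a) ^ (-(1 / 2) : ℝ)) volume a u := by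
    have h := (intervalIntegral.intervalIntegrable_rpow' (r := -(1 / 2)) (by norm_num)
      (a := 0) (b := u - a)).comp_sub_right a
    rw [zero_add, sub_add_cancel] at h
    exact h.const_mul _
  rw [intervalIntegrable_iff_integrableOn_Ioo_of_le hau] at hdom ⊢
  refine hdom.mono'
    ((continuousOn_const.div hq.sqrt fun τ hτ => (hpos τ hτ).ne').aestronglyMeasurable
      measurableSet_Ioo) ((ae_restrict_iff' measurableSet_Ioo).2 (ae_of_all _ fun τ hτ => ?_))
  have hτa : 0 < τ - a := sub_pos.2 hτ.1
  have hsqrt : √c * √(τ - a) ≤ √(q τ) := by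
    rw [← Real.sqrt_mul hc.le]
    exact Real.sqrt_le_sqrt (hle τ hτ)
  rw [Real.norm_of_nonneg (one_div_nonneg.2 (Real.sqrt_nonneg _)), Real.rpow_neg hτa.le,
    ← Real.sqrt_eq_rpow, one_div, ← mul_inv]
  exact inv_anti₀ (mul_pos (Real.sqrt_pos.2 hc) (Real.sqrt_pos.2 hτa)) hsqrt

theorem intervalIntegrable_one_div_sqrt_of_mul_sub_le' {v b c : ℝ} (hc : 0 < c) (hvb : v ≤ b)
    (hq : ContinuousOn q (Ioo v b)) (hle : ∀ τ ∈ Ioo v b, c * (b - τ) ≤ q τ) :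
    IntervalIntegrable (fun τ => 1 / √(q τ)) volume v b := by
  have hmaps : MapsTo (fun τ => -τ) (Ioo (-b) (-v)) (Ioo v b) := fun τ hτ =>
    ⟨lt_neg_of_lt_neg hτ.2, neg_lt.1 hτ.1⟩
  have h := intervalIntegrable_one_div_sqrt_of_mul_sub_le (q := fun τ => q (-τ)) hc
    (neg_le_neg hvb) (hq.comp continuousOn_neg hmaps) fun τ hτ => by
      simpa [sub_eq_add_neg, add_comm] using hle (-τ) (hmaps hτ)
  rw [IntervalIntegrable.iff_comp_neg]
  exact h.symm

theorem intervalIntegrable_one_div_sqrt {a b da db : ℝ} (hab : a < b)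
    (hq : ContinuousOn q (Icc a b)) (hqa : q a = 0) (hqb : q b = 0)
    (hda : HasDerivWithinAt q da (Icc a b) a) (hda₀ : 0 < da)
    (hdb : HasDerivWithinAt q db (Icc a b) b) (hdb₀ : db < 0)
    (hpos : ∀ τ ∈ Ioo a b, 0 < q τ) :
    IntervalIntegrable (fun τ => 1 / √(q τ)) volume a b := by
  have ham : a < (a + b) / 2 := by linarith
  have hmb : (a + b) / 2 < b := by linarith
  obtain ⟨u, hu, hu_le⟩ := (mem_nhdsGT_iff_exists_mem_Ioc_Ioo_subset ham).1 <|
    eventually_mul_sub_le_of_hasDerivWithinAt_Ici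
      (hda.mono_of_mem_nhdsWithin (Icc_mem_nhdsGE hab)) hqa (half_lt_self hda₀)
  obtain ⟨v, hv, hv_le⟩ := (mem_nhdsLT_iff_exists_mem_Ico_Ioo_subset hmb).1 <|
    eventually_mul_sub_le_of_hasDerivWithinAt_Iic
      (hdb.mono_of_mem_nhdsWithin (Icc_mem_nhdsLE hab)) hqb (half_lt_self (neg_pos.2 hdb₀))
  have hqo : ContinuousOn q (Ioo a b) := hq.mono Ioo_subset_Icc_self
  have hmid : IntervalIntegrable (fun τ => 1 / √(q τ)) volume u v :=
    ((continuousOn_const.div hqo.sqrt fun τ hτ => (Real.sqrt_pos.2 (hpos τ hτ)).ne').mono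
      (ordConnected_Ioo.uIcc_subset ⟨hu.1, hu.2.trans_lt hmb⟩
        ⟨ham.trans_le hv.1, hv.2⟩)).intervalIntegrable
  refine ((intervalIntegrable_one_div_sqrt_of_mul_sub_le (half_pos hda₀) hu.1.le
    (hqo.mono (Ioo_subset_Ioo_right (hu.2.trans hmb.le))) hu_le).trans hmid).trans ?_
  exact intervalIntegrable_one_div_sqrt_of_mul_sub_le' (half_pos (neg_pos.2 hdb₀)) hv.2.le
    (hqo.mono (Ioo_subset_Ioo_left (ham.le.trans hv.1))) hv_le

end Integrability

theorem strictMonoOn_primitive {f : ℝ → ℝ} {a b : ℝ} (hf : IntervalIntegrable f volume a b)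
    (hpos : ∀ x ∈ Ioo a b, 0 < f x) : StrictMonoOn (fun t => ∫ τ in a..t, f τ) (Icc a b) := by
  intro s hs t ht hst
  have hint : ∀ x ∈ Icc a b, IntervalIntegrable f volume a x := fun x hx =>
    hf.mono_set (uIcc_subset_uIcc left_mem_uIcc (Icc_subset_uIcc hx))
  have hst_pos : 0 < ∫ τ in s..t, f τ :=
    intervalIntegral.intervalIntegral_pos_of_pos_on ((hint s hs).symm.trans (hint t ht))
      (fun x hx => hpos x ⟨hs.1.trans_lt hx.1, hx.2.trans_le ht.2⟩) hst
  have := intervalIntegral.integral_interval_sub_left (hint t ht) (hint s hs)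
  simp only
  linarith

section LeftInverse

variable {F G : ℝ → ℝ} {a b : ℝ}

namespace Set.LeftInvOn

variable (hGF : LeftInvOn G F (Icc a b)) (hab : a < b) (hFc : ContinuousOn F (Icc a b))
  (hFm : StrictMonoOn F (Icc a b))
include hGF hab hFc hFm

theorem rightInvOn_Icc : RightInvOn G F (Icc (F a) (F b)) := by
  simpa only [hFc.image_Icc_of_monotoneOn hab.le hFm.monotoneOn] using hGF.rightInvOn_image

theorem image_Icc : G '' Icc (F a) (F b) = Icc a b := by
  rw [← hFc.image_Icc_of_monotoneOn hab.le hFm.monotoneOn, hGF.image_image]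

theorem strictMonoOn_Icc : StrictMonoOn G (Icc (F a) (F b)) := by
  intro s hs t ht hst
  have hmem : ∀ x ∈ Icc (F a) (F b), G x ∈ Icc a b := fun x hx =>
    hGF.image_Icc hab hFc hFm ▸ mem_image_of_mem G hx
  rwa [← hFm.lt_iff_lt (hmem s hs) (hmem t ht), hGF.rightInvOn_Icc hab hFc hFm hs,
    hGF.rightInvOn_Icc hab hFc hFm ht]

theorem mapsTo_Ioo : MapsTo G (Ioo (F a) (F b)) (Ioo a b) := fun s hs => by
  have hmono := hGF.strictMonoOn_Icc hab hFc hFm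
  have hFab : F a ≤ F b := hFm.monotoneOn (left_mem_Icc.2 hab.le) (right_mem_Icc.2 hab.le) hab.le
  have ha := hmono (left_mem_Icc.2 hFab) (Ioo_subset_Icc_self hs) hs.1
  have hb := hmono (Ioo_subset_Icc_self hs) (right_mem_Icc.2 hFab) hs.2
  rw [hGF (left_mem_Icc.2 hab.le)] at ha
  rw [hGF (right_mem_Icc.2 hab.le)] at hb
  exact ⟨ha, hb⟩

theorem continuousWithinAt_Ici : ContinuousWithinAt G (Ici (F a)) (F a) := by
  have hFab : F a < F b := hFm (left_mem_Icc.2 hab.le) (right_mem_Icc.2 hab.le) hab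
  refine continuousWithinAt_right_of_monotoneOn_of_image_mem_nhdsWithin
    (hGF.strictMonoOn_Icc hab hFc hFm).monotoneOn (Icc_mem_nhdsGE hFab) ?_
  rw [hGF.image_Icc hab hFc hFm, hGF (left_mem_Icc.2 hab.le)]
  exact Icc_mem_nhdsGE hab

theorem continuousWithinAt_Iic : ContinuousWithinAt G (Iic (F b)) (F b) := by
  have hFab : F a < F b := hFm (left_mem_Icc.2 hab.le) (right_mem_Icc.2 hab.le) hab
  refine continuousWithinAt_left_of_monotoneOn_of_image_mem_nhdsWithin
    (hGF.strictMonoOn_Icc hab hFc hFm).monotoneOn (Icc_mem_nhdsLE hFab) ?_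
  rw [hGF.image_Icc hab hFc hFm, hGF (right_mem_Icc.2 hab.le)]
  exact Icc_mem_nhdsLE hab

theorem hasDerivAt {s F' : ℝ} (hs : s ∈ Ioo (F a) (F b)) (hF : HasDerivAt F F' (G s))
    (hF' : F' ≠ 0) : HasDerivAt G F'⁻¹ s := by
  have hGs := hGF.mapsTo_Ioo hab hFc hFm hs
  refine hF.of_local_left_inverse ?_ hF' ?_
  · refine continuousAt_of_monotoneOn_of_image_mem_nhds
      (hGF.strictMonoOn_Icc hab hFc hFm).monotoneOn (Icc_mem_nhds hs.1 hs.2) ?_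
    rw [hGF.image_Icc hab hFc hFm]
    exact Icc_mem_nhds hGs.1 hGs.2
  · filter_upwards [Ioo_mem_nhds hs.1 hs.2] with x hx
    exact hGF.rightInvOn_Icc hab hFc hFm (Ioo_subset_Icc_self hx)

end Set.LeftInvOn

end LeftInverse

theorem hasDerivWithinAt_Icc_of_tendsto {g d : ℝ → ℝ} {x y : ℝ} (hxy : x < y)
    (hd : ∀ s ∈ Ioo x y, HasDerivAt g (d s) s)
    (hgx : ContinuousWithinAt g (Ici x) x) (hgy : ContinuousWithinAt g (Iic y) y)
    (hdx : Tendsto d (𝓝[>] x) (𝓝 (d x))) (hdy : Tendsto d (𝓝[<] y) (𝓝 (d y)))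
    {s : ℝ} (hs : s ∈ Icc x y) : HasDerivWithinAt g (d s) (Icc x y) s := by
  have hdiff : DifferentiableOn ℝ g (Ioo x y) := fun s hs =>
    (hd s hs).differentiableAt.differentiableWithinAt
  have hderiv : ∀ s ∈ Ioo x y, d s = deriv g s := fun s hs => (hd s hs).deriv.symm
  rcases hs.1.eq_or_lt with rfl | hxs
  · refine (hasDerivWithinAt_Ici_of_tendsto_deriv hdiff
      (hgx.mono (Ioo_subset_Ioi_self.trans Ioi_subset_Ici_self)) (Ioo_mem_nhdsGT hxy) ?_).mono
      Icc_subset_Ici_self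
    exact hdx.congr' (mem_of_superset (Ioo_mem_nhdsGT hxy) hderiv)
  rcases hs.2.eq_or_lt with rfl | hsy
  · refine (hasDerivWithinAt_Iic_of_tendsto_deriv hdiff
      (hgy.mono (Ioo_subset_Iio_self.trans Iio_subset_Iic_self)) (Ioo_mem_nhdsLT hxy) ?_).mono
      Icc_subset_Iic_self
    exact hdy.congr' (mem_of_superset (Ioo_mem_nhdsLT hxy) hderiv)
  exact (hd s ⟨hxs, hsy⟩).hasDerivWithinAt

theorem Set.LeftInvOn.hasDerivWithinAt_sqrt {F G q : ℝ → ℝ} {a b : ℝ}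
    (hGF : LeftInvOn G F (Icc a b)) (hab : a < b) (hFc : ContinuousOn F (Icc a b))
    (hFm : StrictMonoOn F (Icc a b)) (hq : ContinuousOn q (Icc a b))
    (hpos : ∀ τ ∈ Ioo a b, 0 < q τ) (hF : ∀ x ∈ Ioo a b, HasDerivAt F (1 / √(q x)) x)
    {s : ℝ} (hs : s ∈ Icc (F a) (F b)) :
    HasDerivWithinAt G (√(q (G s))) (Icc (F a) (F b)) s := by
  have hFab : F a < F b := hFm (left_mem_Icc.2 hab.le) (right_mem_Icc.2 hab.le) hab
  have hmaps : MapsTo G (Ioo (F a) (F b)) (Icc a b) := fun s hs =>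
    Ioo_subset_Icc_self (hGF.mapsTo_Ioo hab hFc hFm hs)
  have hsqrt : ∀ x, ContinuousWithinAt G (Ioo (F a) (F b)) x → G x ∈ Icc a b →
      ContinuousWithinAt (fun s => √(q (G s))) (Ioo (F a) (F b)) x := fun x hGx hx =>
    ((hq _ hx).comp hGx hmaps).sqrt
  refine hasDerivWithinAt_Icc_of_tendsto (d := fun s => √(q (G s))) hFab (fun s hs => ?_)
    (hGF.continuousWithinAt_Ici hab hFc hFm) (hGF.continuousWithinAt_Iic hab hFc hFm) ?_ ?_ hs
  · have hGs := hGF.mapsTo_Ioo hab hFc hFm hs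
    simpa using hGF.hasDerivAt hab hFc hFm hs (hF _ hGs)
      (one_div_pos.2 (Real.sqrt_pos.2 (hpos _ hGs))).ne'
  · rw [← nhdsWithin_Ioo_eq_nhdsGT hFab]
    refine hsqrt _ ((hGF.continuousWithinAt_Ici hab hFc hFm).mono
      (Ioo_subset_Ioi_self.trans Ioi_subset_Ici_self)) ?_
    rw [hGF (left_mem_Icc.2 hab.le)]
    exact left_mem_Icc.2 hab.le
  · rw [← nhdsWithin_Ioo_eq_nhdsLT hFab]
    refine hsqrt _ ((hGF.continuousWithinAt_Iic hab hFc hFm).mono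
      (Ioo_subset_Iio_self.trans Iio_subset_Iic_self)) ?_
    rw [hGF (right_mem_Icc.2 hab.le)]
    exact right_mem_Icc.2 hab.le

theorem hasDerivAt_primitive_of_continuousOn_Ioo {f : ℝ → ℝ} {a b x : ℝ}
    (hf : IntervalIntegrable f volume a b) (hfc : ContinuousOn f (Ioo a b)) (hx : x ∈ Ioo a b) :
    HasDerivAt (fun t => ∫ τ in a..t, f τ) (f x) x :=
  intervalIntegral.integral_hasDerivAt_right
    (hf.mono_set (uIcc_subset_uIcc left_mem_uIcc (Icc_subset_uIcc (Ioo_subset_Icc_self hx))))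
    (hfc.stronglyMeasurableAtFilter isOpen_Ioo x hx) (hfc.continuousAt (Ioo_mem_nhds hx.1 hx.2))

theorem exists_hasDerivAt_sq_eq_of_leftInvOn {F G g q : ℝ → ℝ} {a b : ℝ} (hab : a < b)
    (hq : ContinuousOn q (Icc a b)) (hqa : q a = 0) (hqb : q b = 0)
    (hpos : ∀ τ ∈ Ioo a b, 0 < q τ) (hFc : ContinuousOn F (Icc a b))
    (hFm : StrictMonoOn F (Icc a b)) (hFa : F a = 0)
    (hF : ∀ x ∈ Ioo a b, HasDerivAt F (1 / √(q x)) x) (hGF : LeftInvOn G F (Icc a b))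
    (hper : Function.Periodic g (2 * F b)) (hgG : ∀ t ∈ Icc 0 (F b), g t = G t)
    (hgG' : ∀ t ∈ Icc (-F b) 0, g t = G (-t)) (t : ℝ) :
    ∃ D, HasDerivAt g D t ∧ D ^ 2 = q (g t) := by
  have hqnn : ∀ x ∈ Icc a b, 0 ≤ q x := by
    rintro x ⟨hax, hxb⟩
    rcases hax.eq_or_lt with rfl | hax
    · exact hqa.ge
    rcases hxb.eq_or_lt with rfl | hxb
    · exact hqb.ge
    exact (hpos x ⟨hax, hxb⟩).le
  have hL : 0 < F b := hFa ▸ hFm (left_mem_Icc.2 hab.le) (right_mem_Icc.2 hab.le) hab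
  have hgG₀ : EqOn g G (Icc (F a) (F b)) := by rwa [hFa]
  have heven : Function.Even g := hper.even_of_forall_mem_Icc hL fun x hx => by
    rcases le_total 0 x with h | h
    · rw [hgG' (-x) ⟨by linarith [hx.2], by linarith⟩, neg_neg, hgG x ⟨h, hx.2⟩]
    · rw [hgG (-x) ⟨by linarith, by linarith [hx.1]⟩, hgG' x ⟨hx.1, h⟩]
  have hderiv : ∀ s ∈ Icc 0 (F b), HasDerivWithinAt g (√(q (g s))) (Icc 0 (F b)) s := by
    intro s hs
    rw [← hFa] at hs ⊢
    rw [hgG₀ hs]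
    exact (hGF.hasDerivWithinAt_sqrt hab hFc hFm hq hpos hF hs).congr_of_mem hgG₀ hs
  have hg₀ : g 0 = a := by rw [hgG 0 ⟨le_rfl, hL.le⟩, ← hFa, hGF (left_mem_Icc.2 hab.le)]
  have hgL : g (F b) = b := by rw [hgG _ ⟨hL.le, le_rfl⟩, hGF (right_mem_Icc.2 hab.le)]
  refine exists_hasDerivAt_sq_eq_of_even_of_periodic hL heven hper hderiv
    (by rw [hg₀, hqa, Real.sqrt_zero]) (by rw [hgL, hqb, Real.sqrt_zero])
    (fun s hs => Real.sq_sqrt (hqnn _ ?_)) t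
  rw [← hFa] at hs
  rw [hgG₀ hs, ← hGF.image_Icc hab hFc hFm]
  exact mem_image_of_mem G hs

/-- Lemma 2.3 of the paper: if `q ∈ C¹([a,b])` has simple zeros at `a` and `b`
and is positive on `(a,b)`, then `F(t) = ∫_a^t q(τ)^{-1/2} dτ` is well defined,
strictly increasing, with finite limit `T/2 = F(b)` as `t → b⁻`; moreover the
`T`-periodic extension `g` of the inverse `G` of `F` solves `(g')² = q ∘ g`. -/
theorem stmt_2 (a b : ℝ) (hab : a < b) (q : ℝ → ℝ)
    (hq : ContDiffOn ℝ 1 q (Set.Icc a b))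
    (hqa : q a = 0) (hqb : q b = 0)
    (hq'a : 0 < derivWithin q (Set.Icc a b) a)
    (hq'b : derivWithin q (Set.Icc a b) b < 0)
    (hqpos : ∀ t, a < t → t < b → 0 < q t)
    (F : ℝ → ℝ)
    (hF : ∀ t, F t = ∫ τ in a..t, 1 / Real.sqrt (q τ)) :
    IntegrableOn (fun τ => 1 / Real.sqrt (q τ)) (Set.Ioo a b) ∧
    StrictMonoOn F (Set.Icc a b) ∧
    Tendsto F (nhdsWithin b (Set.Iio b)) (nhds (F b)) ∧
    ∀ G : ℝ → ℝ,
      (∀ t ∈ Set.Icc a b, G (F t) = t) →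
      (∀ s ∈ Set.Icc (0 : ℝ) (F b), G s ∈ Set.Icc a b) →
      ∀ g : ℝ → ℝ,
        Function.Periodic g (2 * F b) →
        (∀ t ∈ Set.Icc (0 : ℝ) (F b), g t = G t) →
        (∀ t ∈ Set.Icc (-(F b)) (0 : ℝ), g t = G (-t)) →
        Differentiable ℝ g ∧ ∀ t, deriv g t ^ 2 = q (g t) := by
  have hqc : ContinuousOn q (Icc a b) := hq.continuousOn
  have hpos : ∀ τ ∈ Ioo a b, 0 < q τ := fun τ hτ => hqpos τ hτ.1 hτ.2
  have hq' := hq.differentiableOn one_ne_zero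
  have hint : IntervalIntegrable (fun τ => 1 / √(q τ)) volume a b :=
    intervalIntegrable_one_div_sqrt hab hqc hqa hqb
      (hq' a (left_mem_Icc.2 hab.le)).hasDerivWithinAt hq'a
      (hq' b (right_mem_Icc.2 hab.le)).hasDerivWithinAt hq'b hpos
  have hFeq : F = fun t => ∫ τ in a..t, 1 / √(q τ) := funext hF
  have hFc : ContinuousOn F (Icc a b) := by
    rw [hFeq, ← uIcc_of_le hab.le]
    exact intervalIntegral.continuousOn_primitive_interval' hint left_mem_uIcc
  have hFm : StrictMonoOn F (Icc a b) := hFeq ▸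
    strictMonoOn_primitive hint fun τ hτ => one_div_pos.2 (Real.sqrt_pos.2 (hpos τ hτ))
  have hF' : ∀ x ∈ Ioo a b, HasDerivAt F (1 / √(q x)) x := hFeq ▸ fun x =>
    hasDerivAt_primitive_of_continuousOn_Ioo hint <| continuousOn_const.div
      (hqc.mono Ioo_subset_Icc_self).sqrt fun τ hτ => (Real.sqrt_pos.2 (hpos τ hτ)).ne'
  have hFa : F a = 0 := by rw [hF, intervalIntegral.integral_same]
  refine ⟨(intervalIntegrable_iff_integrableOn_Ioo_of_le hab.le).1 hint, hFm,
    ((hFc b (right_mem_Icc.2 hab.le)).mono_of_mem_nhdsWithin (Icc_mem_nhdsLT hab)).tendsto, ?_⟩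
  intro G hGF _ g hper hgG hgG'
  have hsol := exists_hasDerivAt_sq_eq_of_leftInvOn hab hqc hqa hqb hpos hFc hFm hFa hF' hGF
    hper hgG hgG'
  refine ⟨fun t => (hsol t).choose_spec.1.differentiableAt, fun t => ?_⟩
  obtain ⟨D, hD, hDq⟩ := hsol t
  rw [hD.deriv, hDq]
end

section
/- Let $n\ge 2$ and $1\le k\le n$ be integers, $h\in\mathbb{R}$, $c<0$, and let $g:(a_1,a_2)\to\mathbb{R}$ be positive, differentiable with $g'(t)\ne 0$ and $(g'(t))^2 = c - g(t)^2 + g(t)^2\,(h+g(t)^{-n})^2$ for all $t$. Set $\lambda = h+g^{-n}$, $r = g/\sqrt{-c}$, fix $t_0\in(a_1,a_2)$ and let $\theta(t)=\int_{t_0}^t \frac{r(\tau)\lambda(\tau)}{r(\tau)^2+1}\,d\tau$. Let $B_2(s)\in\mathbb{R}^{n+2}$ have $\cos s$ in coordinate $n+1$, $\sin s$ in coordinate $n+2$ and $0$ elsewhere, and $B_3(s)$ have $-\sin s$ in coordinate $n+1$, $\cos s$ in coordinate $n+2$ and $0$ elsewhere. Then $(r')^2 - r^2\lambda^2 = -1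 - r^2$ on $(a_1,a_2)$, and for every $y\in\mathbb{R}^{n+2}$ with $y_{n+1}=y_{n+2}=0$ and $\langle y,y\rangle = -1$, the curves $\phi(u) = r(u)\,y + \sqrt{r(u)^2+1}\,B_2(\theta(u))$ and $\nu(u) = -r(u)\lambda(u)\,y - \frac{r(u)^2\lambda(u)}{\sqrt{r(u)^2+1}}\,B_2(\theta(u)) - \frac{r'(u)}{\sqrt{r(u)^2+1}}\,B_3(\theta(u))$ satisfy: $\langle\phi,\phi\rangle\equiv 1$, $\langle\phi',\phi'\rangle\equiv 1$, $\langle\nu,\nu\rangle\equiv -1$, $\langle\nu,\phi'\rangle\equiv 0$, $\langle\nu(u),v\rangle = 0$ for every $v\in\mathbb{R}^{n+2}$ with $v_{n+1}=v_{n+2}=0$ and $\langle v,y\rangle = 0$, and $\nu'(u) = -(nh-(n-1)\lambda(u))\,\phi'(u)$ for all $u$. -/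
/-! On the span of `y` and the rotating orthonormal pair `B₂(θ), B₃(θ)` the form is
`diag(⟨y,y⟩, 1, 1) = diag(-1, 1, 1)`, and `B₂' = θ' B₃`, `B₃' = -θ' B₂`. So every claim is an
identity between coefficients, which follows from `r'² = r²λ² - 1 - r²` (the equation for `g`
divided by `-c`), `r λ' = -n (λ - h) r'` and, by differentiating the first,
`r'' = r (λ² - 1 - n λ (λ - h))`. This second derivative exists although `g` is only assumed
differentiable: by Darboux `g'` has constant sign, so `g' = ±√(c - g² + g² λ²)` is differentiable. -/

noncomputable def semiForm (k : ℕ) {m : ℕ} (v w : Fin m → ℝ) : ℝ :=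
  ∑ i : Fin m, (if (i : ℕ) < k then (-1 : ℝ) else 1) * v i * w i

open Real Set Filter Topology

noncomputable def frameB₂ (n : ℕ) (s : ℝ) : Fin (n + 2) → ℝ := fun i =>
  if (i : ℕ) = n then cos s else if (i : ℕ) = n + 1 then sin s else 0

noncomputable def frameB₃ (n : ℕ) (s : ℝ) : Fin (n + 2) → ℝ := fun i =>
  if (i : ℕ) = n then -sin s else if (i : ℕ) = n + 1 then cos s else 0

section Frame

variable {n : ℕ}

theorem hasDerivAt_frameB₂ {θ : ℝ → ℝ} {θ' u : ℝ} (hθ : HasDerivAt θ θ' u) :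
    HasDerivAt (fun t => frameB₂ n (θ t)) (θ' • frameB₃ n (θ u)) u := by
  refine hasDerivAt_pi.2 fun i => ?_
  simp only [frameB₂, frameB₃, Pi.smul_apply, smul_eq_mul]
  split_ifs
  · simpa [mul_comm] using hθ.cos
  · simpa [mul_comm] using hθ.sin
  · simpa using hasDerivAt_const u (0 : ℝ)

theorem hasDerivAt_frameB₃ {θ : ℝ → ℝ} {θ' u : ℝ} (hθ : HasDerivAt θ θ' u) :
    HasDerivAt (fun t => frameB₃ n (θ t)) (-(θ' • frameB₂ n (θ u))) u := by
  refine hasDerivAt_pi.2 fun i => ?_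
  simp only [frameB₂, frameB₃, Pi.smul_apply, Pi.neg_apply, smul_eq_mul]
  split_ifs
  · simpa [mul_comm] using hθ.sin.fun_neg
  · simpa [mul_comm] using hθ.cos
  · simpa using hasDerivAt_const u (0 : ℝ)

theorem hasDerivAt_frame_combination (y : Fin (n + 2) → ℝ) {a b c θ : ℝ → ℝ}
    {a' b' c' θ' u : ℝ} (ha : HasDerivAt a a' u) (hb : HasDerivAt b b' u)
    (hc : HasDerivAt c c' u) (hθ : HasDerivAt θ θ' u) :
    HasDerivAt (fun t => a t • y + b t • frameB₂ n (θ t) + c t • frameB₃ n (θ t))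
      (a' • y + (b' - c u * θ') • frameB₂ n (θ u) + (c' + b u * θ') • frameB₃ n (θ u)) u := by
  refine (((ha.smul_const y).add (hb.smul (hasDerivAt_frameB₂ hθ))).add
    (hc.smul (hasDerivAt_frameB₃ hθ))).congr_deriv ?_
  module

end Frame

section Form

variable {k n : ℕ}

theorem semiForm_comm {m : ℕ} (v w : Fin m → ℝ) : semiForm k v w = semiForm k w v :=
  Finset.sum_congr rfl fun _ _ => by ring

theorem semiForm_frame_combination (hkn : k ≤ n) {y z : Fin (n + 2) → ℝ}
    (hy : ∀ i : Fin (n + 2), ((i : ℕ) = n ∨ (i : ℕ) = n + 1) → y i = 0)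
    (hz : ∀ i : Fin (n + 2), ((i : ℕ) = n ∨ (i : ℕ) = n + 1) → z i = 0)
    (a b c a' b' c' s : ℝ) :
    semiForm k (a • y + b • frameB₂ n s + c • frameB₃ n s)
      (a' • z + b' • frameB₂ n s + c' • frameB₃ n s) =
      a * a' * semiForm k y z + (b * b' + c * c') := by
  have hlt : ∀ i : Fin n, (i : ℕ) ≠ n ∧ (i : ℕ) ≠ n + 1 := fun i => ⟨i.isLt.ne, by omega⟩
  have hyn := hy (Fin.last n).castSucc (by simp)
  have hyn' := hy (Fin.last (n + 1)) (by simp)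
  have hzn := hz (Fin.last n).castSucc (by simp)
  have hzn' := hz (Fin.last (n + 1)) (by simp)
  simp only [semiForm, Fin.sum_univ_castSucc, Fin.val_castSucc, Fin.val_last, Pi.add_apply,
    Pi.smul_apply, smul_eq_mul, frameB₂, frameB₃, hlt, hyn, hyn', hzn, hzn',
    if_true, if_false, show ¬ n < k by omega, show ¬ n + 1 < k by omega, n.succ_ne_self,
    mul_zero, zero_add, add_zero, one_mul, Finset.mul_sum]
  rw [add_assoc]
  congr 1
  · exact Finset.sum_congr rfl fun _ _ => by ring
  · linear_combination (b * b' + c * c') * sin_sq_add_cos_sq s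

end Form

theorem hasDerivAt_deriv_of_deriv_sq_eq {g w : ℝ → ℝ} {a b u w' : ℝ}
    (hg : ∀ t ∈ Ioo a b, DifferentiableAt ℝ g t) (hg' : ∀ t ∈ Ioo a b, deriv g t ≠ 0)
    (hsq : ∀ t ∈ Ioo a b, deriv g t ^ 2 = w t) (hw : HasDerivAt w w' u) (hu : u ∈ Ioo a b) :
    HasDerivAt (deriv g) (w' / (2 * deriv g u)) u := by
  have hwu : w u ≠ 0 := hsq u hu ▸ pow_ne_zero 2 (hg' u hu)
  have hIoo : Ioo a b ∈ 𝓝 u := Ioo_mem_nhds hu.1 hu.2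
  rcases hasDerivWithinAt_forall_lt_or_forall_gt_of_forall_ne (convex_Ioo a b)
    (fun t ht => (hg t ht).hasDerivAt.hasDerivWithinAt) hg' with hneg | hpos
  · have hsqrt : ∀ t ∈ Ioo a b, √(w t) = -deriv g t := fun t ht => by
      rw [← hsq t ht, sqrt_sq_eq_abs, abs_of_neg (hneg t ht)]
    refine (hw.sqrt hwu).neg.congr_of_eventuallyEq
      (eventually_of_mem hIoo fun t ht => by simp [hsqrt t ht]) |>.congr_deriv ?_
    rw [hsqrt u hu]
    ring
  · have hsqrt : ∀ t ∈ Ioo a b, √(w t) = deriv g t := fun t ht => by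
      rw [← hsq t ht, sqrt_sq_eq_abs, abs_of_pos (hpos t ht)]
    refine (hw.sqrt hwu).congr_of_eventuallyEq
      (eventually_of_mem hIoo fun t ht => (hsqrt t ht).symm) |>.congr_deriv ?_
    rw [hsqrt u hu]

theorem hasDerivAt_const_add_zpow_neg {g : ℝ → ℝ} {g' u : ℝ} (h : ℝ) (n : ℕ)
    (hg : HasDerivAt g g' u) (hgu : g u ≠ 0) :
    HasDerivAt (fun t => h + g t ^ (-(n : ℤ))) (-n * g u ^ (-(n : ℤ)) * g' / g u) u := by
  refine (((hasDerivAt_zpow _ _ (Or.inl hgu)).comp u hg).const_add h).congr_deriv ?_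
  rw [zpow_sub_one₀ hgu]
  push_cast
  ring

theorem hasDerivAt_integral_of_continuousOn {E : Type*} [NormedAddCommGroup E] [NormedSpace ℝ E]
    [CompleteSpace E] {f : ℝ → E} {a b t₀ u : ℝ} (hf : ContinuousOn f (Ioo a b))
    (ht₀ : t₀ ∈ Ioo a b) (hu : u ∈ Ioo a b) :
    HasDerivAt (fun t => ∫ τ in t₀..t, f τ) (f u) u :=
  intervalIntegral.integral_hasDerivAt_right
    ((hf.mono (ordConnected_Ioo.uIcc_subset ht₀ hu)).intervalIntegrable)
    ⟨_, Ioo_mem_nhds hu.1 hu.2, hf.aestronglyMeasurable measurableSet_Ioo⟩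
    (hf.continuousAt (Ioo_mem_nhds hu.1 hu.2))

structure IsProfileAt (r lam : ℝ → ℝ) (n : ℕ) (h u : ℝ) : Prop where
  ne_zero : r u ≠ 0
  hasDerivAt : HasDerivAt r (deriv r u) u
  hasDerivAt_deriv : HasDerivAt (deriv r) (r u * (lam u ^ 2 - 1 - n * lam u * (lam u - h))) u
  hasDerivAt_lam : HasDerivAt lam (-n * (lam u - h) * deriv r u / r u) u
  deriv_sq : deriv r u ^ 2 = r u ^ 2 * lam u ^ 2 - 1 - r u ^ 2

theorem isProfileAt_of_ode {n : ℕ} {h c a₁ a₂ u : ℝ} {g lam r : ℝ → ℝ} (hc : c < 0)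
    (hgdiff : ∀ t ∈ Ioo a₁ a₂, DifferentiableAt ℝ g t) (hgpos : ∀ t ∈ Ioo a₁ a₂, 0 < g t)
    (hg' : ∀ t ∈ Ioo a₁ a₂, deriv g t ≠ 0)
    (hode : ∀ t ∈ Ioo a₁ a₂,
      deriv g t ^ 2 = c - g t ^ 2 + g t ^ 2 * (h + g t ^ (-(n : ℤ))) ^ 2)
    (hlam : ∀ t, lam t = h + g t ^ (-(n : ℤ))) (hr : ∀ t, r t = g t / √(-c))
    (hu : u ∈ Ioo a₁ a₂) : IsProfileAt r lam n h u := by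
  obtain rfl : lam = fun t => h + g t ^ (-(n : ℤ)) := funext hlam
  obtain rfl : r = fun t => g t / √(-c) := funext hr
  have hs : 0 < √(-c) := sqrt_pos.2 (neg_pos.2 hc)
  have hs2 : √(-c) ^ 2 = -c := sq_sqrt (neg_pos.2 hc).le
  have hderiv : deriv (fun t => g t / √(-c)) = fun t => deriv g t / √(-c) :=
    funext fun t => deriv_div_const _
  have hg := (hgdiff u hu).hasDerivAt
  have hgu := (hgpos u hu).ne'
  have hlam' := hasDerivAt_const_add_zpow_neg h n hg hgu
  have hg'' : HasDerivAt (deriv g)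
      (g u * ((h + g u ^ (-(n : ℤ))) ^ 2 - 1 - n * (h + g u ^ (-(n : ℤ))) * g u ^ (-(n : ℤ)))) u := by
    refine (hasDerivAt_deriv_of_deriv_sq_eq hgdiff hg' hode
      (((hg.fun_pow 2).const_sub c).add ((hg.fun_pow 2).mul (hlam'.fun_pow 2))) hu).congr_deriv ?_
    field_simp [hg' u hu]
    ring
  refine ⟨div_ne_zero hgu hs.ne', ?_, ?_, ?_, ?_⟩
  · rw [hderiv]
    exact hg.div_const _
  · rw [hderiv]
    exact (hg''.div_const _).congr_deriv (by ring)
  · refine hlam'.congr_deriv ?_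
    rw [hderiv]
    field_simp
    ring
  · rw [hderiv]
    field_simp
    linear_combination hode u hu + hs2

theorem hasDerivAt_sqrt_sq_add_one {r : ℝ → ℝ} {r' u : ℝ} (hr : HasDerivAt r r' u) :
    HasDerivAt (fun t => √(r t ^ 2 + 1)) (r u * r' / √(r u ^ 2 + 1)) u :=
  ((hr.fun_pow 2).add_const 1 |>.sqrt (by positivity)).congr_deriv (by push_cast; ring)

section Curves

variable {k n : ℕ} {y : Fin (n + 2) → ℝ} {r lam θ : ℝ → ℝ} {h u : ℝ}

noncomputable def profileCurve (y : Fin (n + 2) → ℝ) (r θ : ℝ → ℝ) (t : ℝ) : Fin (n + 2) → ℝ :=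
  r t • y + √(r t ^ 2 + 1) • frameB₂ n (θ t)

noncomputable def profileNormal (y : Fin (n + 2) → ℝ) (r lam θ : ℝ → ℝ) (t : ℝ) :
    Fin (n + 2) → ℝ :=
  (-(r t * lam t)) • y - (r t ^ 2 * lam t / √(r t ^ 2 + 1)) • frameB₂ n (θ t)
    - (deriv r t / √(r t ^ 2 + 1)) • frameB₃ n (θ t)

theorem profileCurve_eq (t : ℝ) : profileCurve y r θ t =
    r t • y + √(r t ^ 2 + 1) • frameB₂ n (θ t) + (0 : ℝ) • frameB₃ n (θ t) := by
  simp [profileCurve]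

theorem profileNormal_eq (t : ℝ) : profileNormal y r lam θ t =
    (-(r t * lam t)) • y + (-(r t ^ 2 * lam t / √(r t ^ 2 + 1))) • frameB₂ n (θ t)
      + (-(deriv r t / √(r t ^ 2 + 1))) • frameB₃ n (θ t) := by
  simp only [profileNormal, sub_eq_add_neg, neg_smul]

theorem deriv_profileCurve (hr : DifferentiableAt ℝ r u)
    (hθ : HasDerivAt θ (r u * lam u / (r u ^ 2 + 1)) u) :
    deriv (profileCurve y r θ) u = deriv r u • y
      + (r u * deriv r u / √(r u ^ 2 + 1)) • frameB₂ n (θ u)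
      + (r u * lam u / √(r u ^ 2 + 1)) • frameB₃ n (θ u) := by
  refine ((hr.hasDerivAt.smul_const y).add
    ((hasDerivAt_sqrt_sq_add_one hr.hasDerivAt).smul (hasDerivAt_frameB₂ hθ))).deriv.trans ?_
  rw [smul_smul, mul_div_left_comm, sqrt_div_self', mul_one_div]
  abel

theorem semiForm_profileCurve_self (hkn : k ≤ n)
    (hy : ∀ i : Fin (n + 2), ((i : ℕ) = n ∨ (i : ℕ) = n + 1) → y i = 0)
    (hyy : semiForm k y y = -1) (t : ℝ) :
    semiForm k (profileCurve y r θ t) (profileCurve y r θ t) = 1 := by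
  rw [profileCurve_eq, semiForm_frame_combination hkn hy hy, hyy, mul_self_sqrt (by positivity)]
  ring

theorem semiForm_deriv_profileCurve_self (hkn : k ≤ n)
    (hy : ∀ i : Fin (n + 2), ((i : ℕ) = n ∨ (i : ℕ) = n + 1) → y i = 0)
    (hyy : semiForm k y y = -1) (hr : DifferentiableAt ℝ r u)
    (hθ : HasDerivAt θ (r u * lam u / (r u ^ 2 + 1)) u)
    (hsq : deriv r u ^ 2 = r u ^ 2 * lam u ^ 2 - 1 - r u ^ 2) :
    semiForm k (deriv (profileCurve y r θ) u) (deriv (profileCurve y r θ) u) = 1 := by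
  have hρ : √(r u ^ 2 + 1) ^ 2 = r u ^ 2 + 1 := sq_sqrt (by positivity)
  rw [deriv_profileCurve hr hθ, semiForm_frame_combination hkn hy hy, hyy]
  field_simp
  linear_combination (-deriv r u ^ 2 - 1) * hρ - hsq

theorem semiForm_profileNormal_self (hkn : k ≤ n)
    (hy : ∀ i : Fin (n + 2), ((i : ℕ) = n ∨ (i : ℕ) = n + 1) → y i = 0)
    (hyy : semiForm k y y = -1) (hsq : deriv r u ^ 2 = r u ^ 2 * lam u ^ 2 - 1 - r u ^ 2) :
    semiForm k (profileNormal y r lam θ u) (profileNormal y r lam θ u) = -1 := by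
  have hρ : √(r u ^ 2 + 1) ^ 2 = r u ^ 2 + 1 := sq_sqrt (by positivity)
  rw [profileNormal_eq, semiForm_frame_combination hkn hy hy, hyy]
  field_simp
  linear_combination (1 - r u ^ 2 * lam u ^ 2) * hρ + hsq

theorem semiForm_profileNormal_deriv_profileCurve (hkn : k ≤ n)
    (hy : ∀ i : Fin (n + 2), ((i : ℕ) = n ∨ (i : ℕ) = n + 1) → y i = 0)
    (hyy : semiForm k y y = -1) (hr : DifferentiableAt ℝ r u)
    (hθ : HasDerivAt θ (r u * lam u / (r u ^ 2 + 1)) u) :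
    semiForm k (profileNormal y r lam θ u) (deriv (profileCurve y r θ) u) = 0 := by
  have hρ : √(r u ^ 2 + 1) ^ 2 = r u ^ 2 + 1 := sq_sqrt (by positivity)
  rw [profileNormal_eq, deriv_profileCurve hr hθ, semiForm_frame_combination hkn hy hy, hyy]
  field_simp
  linear_combination r u * lam u * deriv r u * hρ

theorem semiForm_profileNormal_of_orthogonal (hkn : k ≤ n)
    (hy : ∀ i : Fin (n + 2), ((i : ℕ) = n ∨ (i : ℕ) = n + 1) → y i = 0)
    {v : Fin (n + 2) → ℝ} (hv : ∀ i : Fin (n + 2), ((i : ℕ) = n ∨ (i : ℕ) = n + 1) → v i = 0)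
    (hvy : semiForm k v y = 0) (t : ℝ) :
    semiForm k (profileNormal y r lam θ t) v = 0 := by
  rw [profileNormal_eq]
  simpa [semiForm_comm v y ▸ hvy] using semiForm_frame_combination hkn hy hv (-(r t * lam t))
    (-(r t ^ 2 * lam t / √(r t ^ 2 + 1))) (-(deriv r t / √(r t ^ 2 + 1))) 1 0 0 (θ t)

theorem hasDerivAt_profileNormal (P : IsProfileAt r lam n h u)
    (hθ : HasDerivAt θ (r u * lam u / (r u ^ 2 + 1)) u) :
    HasDerivAt (profileNormal y r lam θ)
      ((-(n * h - (n - 1) * lam u)) • deriv (profileCurve y r θ) u) u := by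
  have hρ0 : √(r u ^ 2 + 1) ≠ 0 := by positivity
  have hρ : √(r u ^ 2 + 1) ^ 2 = r u ^ 2 + 1 := sq_sqrt (by positivity)
  have hρd := hasDerivAt_sqrt_sq_add_one P.hasDerivAt
  have hr0 := P.ne_zero
  set K := -(n * h - (n - 1) * lam u)
  -- The coefficient derivatives are stated with the rotation terms of `B₂' = θ' B₃`,
  -- `B₃' = -θ' B₂` subtracted, so that `hasDerivAt_frame_combination` returns `K • φ'`.
  have ha : HasDerivAt (fun t => -(r t * lam t)) (K * deriv r u) u :=
    (P.hasDerivAt.fun_mul P.hasDerivAt_lam).neg.congr_deriv (by field_simp; ring)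
  have hb : HasDerivAt (fun t => -(r t ^ 2 * lam t / √(r t ^ 2 + 1)))
      (K * (r u * deriv r u / √(r u ^ 2 + 1))
        + (-(deriv r u / √(r u ^ 2 + 1))) * (r u * lam u / (r u ^ 2 + 1))) u :=
    (((P.hasDerivAt.fun_pow 2).fun_mul P.hasDerivAt_lam).fun_div hρd hρ0).neg.congr_deriv (by
      field_simp
      linear_combination -(deriv r u * r u ^ 3 * lam u) * hρ)
  have hc : HasDerivAt (fun t => -(deriv r t / √(r t ^ 2 + 1)))
      (K * (r u * lam u / √(r u ^ 2 + 1))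
        - (-(r u ^ 2 * lam u / √(r u ^ 2 + 1))) * (r u * lam u / (r u ^ 2 + 1))) u :=
    (P.hasDerivAt_deriv.fun_div hρd hρ0).neg.congr_deriv (by
      field_simp
      linear_combination (1 + r u ^ 2 - r u ^ 2 * lam u ^ 2) * hρ + (r u ^ 2 + 1) * P.deriv_sq)
  rw [deriv_profileCurve P.hasDerivAt.differentiableAt hθ]
  exact ((hasDerivAt_frame_combination y ha hb hc hθ).congr_of_eventuallyEq
    (Eventually.of_forall profileNormal_eq)).congr_deriv (by module)

end Curves

theorem stmt_4_general (n k : ℕ) (hkn : k ≤ n)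
    (h c a₁ a₂ t₀ : ℝ) (hc : c < 0) (ht₀ : t₀ ∈ Set.Ioo a₁ a₂)
    (g lam r θ : ℝ → ℝ)
    (hgdiff : ∀ t ∈ Set.Ioo a₁ a₂, DifferentiableAt ℝ g t)
    (hgpos : ∀ t ∈ Set.Ioo a₁ a₂, 0 < g t)
    (hg' : ∀ t ∈ Set.Ioo a₁ a₂, deriv g t ≠ 0)
    (hode : ∀ t ∈ Set.Ioo a₁ a₂,
      deriv g t ^ 2 = c - g t ^ 2 + g t ^ 2 * (h + g t ^ (-(n : ℤ))) ^ 2)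
    (hlam : ∀ t, lam t = h + g t ^ (-(n : ℤ)))
    (hr : ∀ t, r t = g t / Real.sqrt (-c))
    (hθ : ∀ t, θ t = ∫ τ in t₀..t, r τ * lam τ / (r τ ^ 2 + 1))
    (B₂ B₃ : ℝ → Fin (n + 2) → ℝ)
    (hB₂ : ∀ s i, B₂ s i =
      if (i : ℕ) = n then Real.cos s else if (i : ℕ) = n + 1 then Real.sin s else 0)
    (hB₃ : ∀ s i, B₃ s i =
      if (i : ℕ) = n then -Real.sin s else if (i : ℕ) = n + 1 then Real.cos s else 0) :
    (∀ t ∈ Set.Ioo a₁ a₂, deriv r t ^ 2 - r t ^ 2 * lam t ^ 2 = -1 - r t ^ 2) ∧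
    ∀ y : Fin (n + 2) → ℝ,
      (∀ i : Fin (n + 2), ((i : ℕ) = n ∨ (i : ℕ) = n + 1) → y i = 0) →
      semiForm k y y = -1 →
      ∀ φ ν : ℝ → Fin (n + 2) → ℝ,
        (∀ u, φ u = r u • y + Real.sqrt (r u ^ 2 + 1) • B₂ (θ u)) →
        (∀ u, ν u = (-(r u * lam u)) • y
            - (r u ^ 2 * lam u / Real.sqrt (r u ^ 2 + 1)) • B₂ (θ u)
            - (deriv r u / Real.sqrt (r u ^ 2 + 1)) • B₃ (θ u)) →
        ∀ u ∈ Set.Ioo a₁ a₂,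
          semiForm k (φ u) (φ u) = 1 ∧
          semiForm k (deriv φ u) (deriv φ u) = 1 ∧
          semiForm k (ν u) (ν u) = -1 ∧
          semiForm k (ν u) (deriv φ u) = 0 ∧
          (∀ v : Fin (n + 2) → ℝ,
            (∀ i : Fin (n + 2), ((i : ℕ) = n ∨ (i : ℕ) = n + 1) → v i = 0) →
            semiForm k v y = 0 → semiForm k (ν u) v = 0) ∧
          deriv ν u = (-((n : ℝ) * h - ((n : ℝ) - 1) * lam u)) • deriv φ u := by
  have hP : ∀ t ∈ Ioo a₁ a₂, IsProfileAt r lam n h t := fun t ht =>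
    isProfileAt_of_ode hc hgdiff hgpos hg' hode hlam hr ht
  refine ⟨fun t ht => by linear_combination (hP t ht).deriv_sq, ?_⟩
  intro y hy hyy φ ν hφ hν u hu
  obtain rfl : B₂ = frameB₂ n := funext fun s => funext (hB₂ s)
  obtain rfl : B₃ = frameB₃ n := funext fun s => funext (hB₃ s)
  obtain rfl : φ = profileCurve y r θ := funext hφ
  obtain rfl : ν = profileNormal y r lam θ := funext hν
  have hcont : ContinuousOn (fun τ => r τ * lam τ / (r τ ^ 2 + 1)) (Ioo a₁ a₂) := fun t ht =>
    have hrt := (hP t ht).hasDerivAt.continuousAt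
    ((hrt.mul (hP t ht).hasDerivAt_lam.continuousAt).div ((hrt.pow 2).add continuousAt_const)
      (by positivity : r t ^ 2 + 1 ≠ 0)).continuousWithinAt
  have hθu : HasDerivAt θ (r u * lam u / (r u ^ 2 + 1)) u := by
    rw [funext hθ]
    exact hasDerivAt_integral_of_continuousOn hcont ht₀ hu
  have hru := (hP u hu).hasDerivAt.differentiableAt
  exact ⟨semiForm_profileCurve_self hkn hy hyy u,
    semiForm_deriv_profileCurve_self hkn hy hyy hru hθu (hP u hu).deriv_sq,
    semiForm_profileNormal_self hkn hy hyy (hP u hu).deriv_sq,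
    semiForm_profileNormal_deriv_profileCurve hkn hy hyy hru hθu,
    fun v hv hvy => semiForm_profileNormal_of_orthogonal hkn hy hv hvy u,
    (hasDerivAt_profileNormal (hP u hu) hθu).deriv⟩

/-- Theorem 2.7 of the paper (second family of cmc hypersurfaces of `𝕊_k^{n+1}`).
Coordinates `n+1` and `n+2` of the paper (1-indexed) are indices `n` and `n+1` here. -/
theorem stmt_4 (n k : ℕ) (hn : 2 ≤ n) (hk1 : 1 ≤ k) (hkn : k ≤ n)
    (h c a₁ a₂ t₀ : ℝ) (hc : c < 0) (ht₀ : t₀ ∈ Set.Ioo a₁ a₂)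
    (g lam r θ : ℝ → ℝ)
    (hgdiff : ∀ t ∈ Set.Ioo a₁ a₂, DifferentiableAt ℝ g t)
    (hgpos : ∀ t ∈ Set.Ioo a₁ a₂, 0 < g t)
    (hg' : ∀ t ∈ Set.Ioo a₁ a₂, deriv g t ≠ 0)
    (hode : ∀ t ∈ Set.Ioo a₁ a₂,
      deriv g t ^ 2 = c - g t ^ 2 + g t ^ 2 * (h + g t ^ (-(n : ℤ))) ^ 2)
    (hlam : ∀ t, lam t = h + g t ^ (-(n : ℤ)))
    (hr : ∀ t, r t = g t / Real.sqrt (-c))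
    (hθ : ∀ t, θ t = ∫ τ in t₀..t, r τ * lam τ / (r τ ^ 2 + 1))
    (B₂ B₃ : ℝ → Fin (n + 2) → ℝ)
    (hB₂ : ∀ s i, B₂ s i =
      if (i : ℕ) = n then Real.cos s else if (i : ℕ) = n + 1 then Real.sin s else 0)
    (hB₃ : ∀ s i, B₃ s i =
      if (i : ℕ) = n then -Real.sin s else if (i : ℕ) = n + 1 then Real.cos s else 0) :
    (∀ t ∈ Set.Ioo a₁ a₂, deriv r t ^ 2 - r t ^ 2 * lam t ^ 2 = -1 - r t ^ 2) ∧
    ∀ y : Fin (n + 2) → ℝ,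
      (∀ i : Fin (n + 2), ((i : ℕ) = n ∨ (i : ℕ) = n + 1) → y i = 0) →
      semiForm k y y = -1 →
      ∀ φ ν : ℝ → Fin (n + 2) → ℝ,
        (∀ u, φ u = r u • y + Real.sqrt (r u ^ 2 + 1) • B₂ (θ u)) →
        (∀ u, ν u = (-(r u * lam u)) • y
            - (r u ^ 2 * lam u / Real.sqrt (r u ^ 2 + 1)) • B₂ (θ u)
            - (deriv r u / Real.sqrt (r u ^ 2 + 1)) • B₃ (θ u)) →
        ∀ u ∈ Set.Ioo a₁ a₂,
          semiForm k (φ u) (φ u) = 1 ∧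
          semiForm k (deriv φ u) (deriv φ u) = 1 ∧
          semiForm k (ν u) (ν u) = -1 ∧
          semiForm k (ν u) (deriv φ u) = 0 ∧
          (∀ v : Fin (n + 2) → ℝ,
            (∀ i : Fin (n + 2), ((i : ℕ) = n ∨ (i : ℕ) = n + 1) → v i = 0) →
            semiForm k v y = 0 → semiForm k (ν u) v = 0) ∧
          deriv ν u = (-((n : ℝ) * h - ((n : ℝ) - 1) * lam u)) • deriv φ u :=
  stmt_4_general n k hkn h c a₁ a₂ t₀ hc ht₀ g lam r θ hgdiff hgpos hg' hode hlam hr hθ B₂ B₃ hB₂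
    hB₃
end
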